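/- For every partition λ and all partitions γ of any size n ≥ |λ| + λ_1, the value of the irreducible character of S_n indexed by (n−|λ|, λ) at a permutation of cycle type γ is given by a polynomial, independent of n, in the part-multiplicities of γ: there exists a polynomial q_λ(x_1, x_2, …) with rational coefficients such that χ^{(n−|λ|,λ)}(1^{m_1} 2^{m_2} ⋯) = q_λ(m_1, m_2, …) for all nonnegative integers m_1, m_2, … with Σ_i i·m_i = n ≥ |λ| + λ_1. -/

import Mathlib

open scoped BigOperators

noncomputable section

/-- The ring of symmetric functions over `ℚ`, realized as the free commutative
`ℚ`-algebra on the power sums `p_1, p_2, p_3, …`. -/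
abbrev SymF : Type := MvPolynomial ℕ+ ℚ

/-- The power sum symmetric function `p_k`. -/
def pp (k : ℕ+) : SymF := MvPolynomial.X k

/-- `p_μ = p_{μ_1} p_{μ_2} ⋯` for a partition `μ` (a multiset of positive parts). -/
def pProd (mu : Multiset ℕ+) : SymF := (mu.map pp).prod

/-- The size `|μ|` of a partition. -/
def psize (mu : Multiset ℕ+) : ℕ := (mu.map (fun i => (i : ℕ))).sum

/-- The largest part `μ_1` of a partition (0 for the empty partition). -/
def maxPart (mu : Multiset ℕ+) : ℕ := (mu.map (fun i => (i : ℕ))).sup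

/-- `z_μ = ∏_i m_i(μ)! · i^{m_i(μ)}`. -/
def zMult (mu : Multiset ℕ+) : ℕ :=
  (mu.map (fun i => (i : ℕ))).prod * ∏ i ∈ mu.toFinset, (mu.count i).factorial

/-- `Ξ_μ` : the multiset of eigenvalues of a permutation matrix of cycle type `μ`,
i.e. the multiset union over all parts `μ_i` of all `μ_i`-th roots of unity. -/
def Xi (mu : Multiset ℕ+) : Multiset ℂ :=
  mu.bind (fun k => (Multiset.range (k : ℕ)).map
    (fun j => Complex.exp (2 * (Real.pi : ℂ) * Complex.I * (j : ℂ) / ((k : ℕ) : ℂ))))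

/-- Evaluation `f[Ξ_μ]` of a symmetric function at the eigenvalues of a permutation
matrix of cycle type `μ` : substitute each power sum `p_k` by the `k`-th power sum of
the members of the multiset `Ξ_μ`. -/
def evalXi (mu : Multiset ℕ+) (f : SymF) : ℂ :=
  MvPolynomial.aeval (fun k : ℕ+ => ((Xi mu).map (fun x => x ^ (k : ℕ))).sum) f

/-- The complete homogeneous symmetric function `h_n = Σ_{μ ⊢ n} p_μ / z_μ`. -/
def hn (n : ℕ) : SymF :=
  ∑ᶠ mu ∈ {mu : Multiset ℕ+ | psize mu = n}, ((zMult mu : ℚ))⁻¹ • pProd mu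

/-- `h_λ = h_{λ_1} h_{λ_2} ⋯`. -/
def hProd (lam : Multiset ℕ+) : SymF := (lam.map (fun i => hn (i : ℕ))).prod

/-- `h_a` for an integer index, with `h_a = 0` for `a < 0`. -/
def hZ (a : ℤ) : SymF := if 0 ≤ a then hn a.toNat else 0

/-- `h_l = h_{l_1} ⋯ h_{l_r}` for a list of row lengths. -/
def hOfList (l : List ℕ) : SymF := (l.map hn).prod

/-- `z` of an exponent vector: the monomial `∏ p_k^{d_k}` is `p_γ` where `γ` has
`d_k` parts equal to `k`, and `zMon d = z_γ`. -/
def zMon (d : ℕ+ →₀ ℕ) : ℚ :=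
  ∏ k ∈ d.support, ((d k).factorial : ℚ) * ((k : ℕ) : ℚ) ^ (d k)

/-- The Hall inner product on `SymF`, determined by `⟨p_γ, p_δ⟩ = δ_{γδ} z_γ`. -/
def hall (f g : SymF) : ℚ :=
  ∑ d ∈ f.support, f.coeff d * g.coeff d * zMon d

/-- The Schur function indexed by a list of row lengths, via the Jacobi–Trudi
determinant `s_α = det(h_{α_i - i + j})`. -/
def schurOfList (l : List ℕ) : SymF :=
  (Matrix.of (fun i j : Fin l.length => hZ ((l.get i : ℤ) + (j : ℤ) - (i : ℤ)))).det

/-- The irreducible symmetric group character `χ^α(γ) = ⟨s_α, p_γ⟩`. -/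
def chi (l : List ℕ) (gamma : Multiset ℕ+) : ℚ := hall (schurOfList l) (pProd gamma)

/-- The degree of a symmetric function (the power sum `p_k` having degree `k`). -/
def symDeg (f : SymF) : ℕ :=
  MvPolynomial.weightedTotalDegree (fun k : ℕ+ => (k : ℕ)) f

/-- The parts of a partition, sorted decreasingly `(λ_1, λ_2, …)`. -/
def toList (lam : Multiset ℕ+) : List ℕ :=
  ((lam.map (fun i => (i : ℕ))).sort (· ≤ ·)).reverse

/-- The content multiset `{1^{λ_1}, 2^{λ_2}, …, ℓ^{λ_ℓ}}` of a partition. -/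
def contentMultiset (lam : Multiset ℕ+) : Multiset ℕ :=
  ((toList lam).zipIdx.flatMap (fun ia => List.replicate ia.1 (ia.2 + 1)) : List ℕ)

/-- `π` is a multiset partition of the multiset `S`: a multiset of nonempty
multisets whose multiset union is `S`. -/
def IsMSP (pi : Multiset (Multiset ℕ)) (S : Multiset ℕ) : Prop :=
  (0 : Multiset ℕ) ∉ pi ∧ pi.sum = S

/-- `m̃(π)`: the partition of `ℓ(π)` recording the multiplicities with which the
distinct blocks occur in the multiset partition `π`. -/
def mtilde (pi : Multiset (Multiset ℕ)) : Multiset ℕ+ :=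
  pi.toFinset.val.map (fun B => (pi.count B).toPNat')

/-- The defining relation of the induced trivial character basis `h̃`:
`h_λ = Σ_{π ⊩ {1^{λ_1},…,ℓ^{λ_ℓ}}} h̃_{m̃(π)}` for every partition `λ`. -/
def HTdef (ht : Multiset ℕ+ → SymF) : Prop :=
  ∀ lam : Multiset ℕ+,
    hProd lam =
      ∑ᶠ pi ∈ {pi : Multiset (Multiset ℕ) | IsMSP pi (contentMultiset lam)},
        ht (mtilde pi)

/-- The defining property of the irreducible character basis `s̃` : each `s̃_λ` has
degree `|λ|` and satisfies `s̃_λ[Ξ_γ] = χ^{(|γ|-|λ|,λ)}(γ)` whenever `|γ| ≥ |λ|+λ_1`. -/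
def STdef (st : Multiset ℕ+ → SymF) : Prop :=
  ∀ lam : Multiset ℕ+,
    symDeg (st lam) = psize lam ∧
    ∀ gamma : Multiset ℕ+, psize lam + maxPart lam ≤ psize gamma →
      evalXi gamma (st lam) =
        ((chi ((psize gamma - psize lam) :: toList lam) gamma : ℚ) : ℂ)

-- ### helpers
open MvPolynomial Finset

def wt (d : ℕ+ →₀ ℕ) : ℕ := d.sum fun k n => (k : ℕ) * n

lemma wt_add (a b : ℕ+ →₀ ℕ) : wt (a + b) = wt a + wt b := by
  unfold wt
  rw [Finsupp.sum_add_index] <;> intros <;> simp [mul_add]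

lemma wt_single (a : ℕ+) (n : ℕ) : wt (Finsupp.single a n) = a * n := by
  unfold wt; rw [Finsupp.sum_single_index]; simp

lemma psize_toMultiset (d : ℕ+ →₀ ℕ) : psize (Finsupp.toMultiset d) = wt d := by
  induction d using Finsupp.induction with
  | zero => simp [psize, wt]
  | single_add a b f ha hb ih =>
      rw [Finsupp.toMultiset_add, wt_add, ← ih, wt_single]
      simp [psize, Finsupp.toMultiset_single, Multiset.map_nsmul, Multiset.nsmul_singleton,
        Multiset.sum_replicate, mul_comm, smul_eq_mul]

lemma zMon_eq_prod (d : ℕ+ →₀ ℕ) :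
    zMon d = d.prod fun k n => (n.factorial : ℚ) * ((k:ℕ):ℚ)^n := rfl

lemma zMon_ne_zero (d : ℕ+ →₀ ℕ) : zMon d ≠ 0 := by
  unfold zMon
  apply Finset.prod_ne_zero_iff.2
  intro k _
  positivity

lemma psize_def' (mu : Multiset ℕ+) : psize mu = (mu.map PNat.val).sum := by simp [psize]

lemma zMult_def' (mu : Multiset ℕ+) :
    zMult mu = (mu.map PNat.val).prod * ∏ i ∈ mu.toFinset, (mu.count i).factorial := by
  simp [zMult]

lemma mapcoe_toMultiset_prod (d : ℕ+ →₀ ℕ) :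
    ((Finsupp.toMultiset d).map PNat.val).prod
      = ∏ k ∈ d.support, ((k:ℕ))^(d k) := by
  rw [show (∏ k ∈ d.support, ((k:ℕ))^(d k)) = d.prod fun k n => (k:ℕ)^n from rfl]
  induction d using Finsupp.induction with
  | zero => simp
  | single_add a b f ha hb ih =>
      rw [Finsupp.toMultiset_add, Multiset.map_add, Multiset.prod_add, ih,
        Finsupp.prod_add_index (by simp) (by intros; rw [pow_add]),
        Finsupp.toMultiset_single, Finsupp.prod_single_index (by simp)]
      simp [Multiset.map_nsmul, Multiset.prod_nsmul]

lemma zMult_toMultiset (d : ℕ+ →₀ ℕ) : ((zMult (Finsupp.toMultiset d) : ℕ) : ℚ) = zMon d := by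
  unfold zMon
  rw [zMult_def', mapcoe_toMultiset_prod, Finsupp.toFinset_toMultiset]
  push_cast
  rw [← Finset.prod_mul_distrib]
  exact Finset.prod_congr rfl fun k hk => by rw [Finsupp.count_toMultiset]; ring

lemma pProd_eq_monomial (mu : Multiset ℕ+) :
    pProd mu = monomial (Multiset.toFinsupp mu) 1 := by
  induction mu using Multiset.induction with
  | empty => simp [pProd, monomial_zero', C_1]
  | cons a s ih =>
      rw [pProd, Multiset.map_cons, Multiset.prod_cons, ← pProd, ih,
        show (a ::ₘ s) = {a} + s from rfl, Multiset.toFinsupp_add,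
        Multiset.toFinsupp_singleton, pp, X, monomial_mul, one_mul]

lemma hall_monomial (f : SymF) (m : ℕ+ →₀ ℕ) :
    hall f (monomial m 1) = f.coeff m * zMon m := by
  classical
  unfold hall
  rw [Finset.sum_eq_single m]
  · simp [coeff_monomial]
  · intro d _ hd
    rw [coeff_monomial, if_neg (Ne.symm hd)]
    ring
  · intro h
    rw [notMem_support_iff.mp h]
    ring

-- finiteness of the set of partitions of n
lemma partitions_finite (n : ℕ) : {mu : Multiset ℕ+ | psize mu = n}.Finite := by
  rw [← Set.finite_coe_iff]
  refine Finite.of_injective (fun x => (⟨x.1.map PNat.val,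
    fun {i} hi => ?_, ?_⟩ : n.Partition)) ?_
  · obtain ⟨a, _, rfl⟩ := Multiset.mem_map.mp hi; exact a.pos
  · have := x.2
    simpa [psize_def'] using this
  · intro x y hxy
    have : x.1.map PNat.val = y.1.map PNat.val := congrArg Nat.Partition.parts hxy
    exact Subtype.ext (Multiset.map_injective (fun a b h => PNat.coe_injective h) this)

lemma hn_eq_sum (n : ℕ) :
    hn n = ∑ mu ∈ (partitions_finite n).toFinset, ((zMult mu : ℚ))⁻¹ • pProd mu :=
  finsum_mem_eq_finite_toFinset_sum _ (partitions_finite n)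

lemma coeff_hn (n : ℕ) (d : ℕ+ →₀ ℕ) :
    (hn n).coeff d = if wt d = n then (zMon d)⁻¹ else 0 := by
  classical
  rw [hn_eq_sum, coeff_sum]
  simp only [coeff_smul, pProd_eq_monomial, coeff_monomial, smul_eq_mul]
  by_cases h : wt d = n
  · rw [Finset.sum_eq_single (Finsupp.toMultiset d)]
    · rw [if_pos (Finsupp.toMultiset_toFinsupp d), zMult_toMultiset, mul_one, if_pos h]
    · intro mu _ hmu
      rw [if_neg, mul_zero]
      intro hc
      exact hmu (by rw [← hc, Multiset.toFinsupp_toMultiset])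
    · intro hmem
      exfalso
      apply hmem
      rw [Set.Finite.mem_toFinset, Set.mem_setOf_eq, psize_toMultiset, h]
  · rw [if_neg h, Finset.sum_eq_zero]
    intro mu hmu
    rw [Set.Finite.mem_toFinset, Set.mem_setOf_eq] at hmu
    rw [if_neg, mul_zero]
    intro hc
    apply h
    calc wt d = wt (Multiset.toFinsupp mu) := by rw [hc]
      _ = psize (Finsupp.toMultiset (Multiset.toFinsupp mu)) := (psize_toMultiset _).symm
      _ = psize mu := by rw [Multiset.toFinsupp_toMultiset]
      _ = n := hmu

-- descFactorial cast
lemma cast_descFactorial (a b : ℕ) :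
    ((a.descFactorial b : ℕ) : ℚ) = ∏ t ∈ Finset.range b, ((a:ℚ) - t) := by
  induction b with
  | zero => simp
  | succ b ih =>
      rw [Finset.prod_range_succ, ← ih, Nat.descFactorial_succ]
      by_cases h : b ≤ a
      · push_cast [Nat.cast_sub h]; ring
      · rw [Nat.descFactorial_eq_zero_iff_lt.mpr (by omega)]
        push_cast; ring

def Qpoly (d : ℕ+ →₀ ℕ) : MvPolynomial ℕ+ ℚ :=
  ∏ k ∈ d.support,
    ((C (((k:ℕ):ℚ)))^(d k) * ∏ t ∈ Finset.range (d k), (X k - C (t:ℚ)))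

lemma eval_Qpoly (d m : ℕ+ →₀ ℕ) :
    eval (fun k : ℕ+ => ((m k : ℕ) : ℚ)) (Qpoly d)
      = ∏ k ∈ d.support, (((k:ℕ):ℚ))^(d k) * ((m k).descFactorial (d k) : ℚ) := by
  unfold Qpoly
  rw [map_prod]
  refine Finset.prod_congr rfl fun k _ => ?_
  rw [map_mul, map_pow, eval_C, map_prod, cast_descFactorial]
  congr 1
  exact Finset.prod_congr rfl fun t _ => by rw [map_sub, eval_X, eval_C]

lemma eval_Qpoly_of_not_le (d m : ℕ+ →₀ ℕ) (h : ¬ d ≤ m) :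
    eval (fun k : ℕ+ => ((m k : ℕ) : ℚ)) (Qpoly d) = 0 := by
  rw [eval_Qpoly]
  rw [Finsupp.le_def, not_forall] at h
  obtain ⟨k, hk⟩ := h
  push_neg at hk
  refine Finset.prod_eq_zero (Finsupp.mem_support_iff.mpr
    (Nat.pos_iff_ne_zero.mp (Nat.lt_of_le_of_lt (Nat.zero_le _) hk))) ?_
  rw [Nat.descFactorial_eq_zero_iff_lt.mpr hk]
  simp

lemma support_subset_of_le {d m : ℕ+ →₀ ℕ} (h : d ≤ m) : d.support ⊆ m.support := by
  intro k hk
  rw [Finsupp.mem_support_iff] at hk ⊢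
  have := Finsupp.le_def.mp h k
  omega

lemma eval_Qpoly_of_le (d m : ℕ+ →₀ ℕ) (h : d ≤ m) :
    zMon (m - d) * eval (fun k : ℕ+ => ((m k : ℕ) : ℚ)) (Qpoly d) = zMon m := by
  classical
  rw [eval_Qpoly]
  unfold zMon
  have hsub : (m - d).support ⊆ m.support := support_subset_of_le tsub_le_self
  have hd : d.support ⊆ m.support := support_subset_of_le h
  rw [Finset.prod_subset hsub (by
      intro k _ hk
      rw [Finsupp.notMem_support_iff.mp hk]
      simp),
    Finset.prod_subset hd (by
      intro k _ hk
      rw [Finsupp.notMem_support_iff.mp hk]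
      simp),
    ← Finset.prod_mul_distrib]
  refine Finset.prod_congr rfl fun k _ => ?_
  have hle : d k ≤ m k := Finsupp.le_def.mp h k
  rw [Finsupp.tsub_apply]
  have key : ((m k - d k).factorial * (m k).descFactorial (d k) : ℕ) = (m k).factorial :=
    Nat.factorial_mul_descFactorial hle
  have key' : (((m k - d k).factorial : ℚ)) * ((m k).descFactorial (d k) : ℚ)
      = ((m k).factorial : ℚ) := by exact_mod_cast congrArg (Nat.cast : ℕ → ℚ) key
  have hpow : (((k:ℕ):ℚ)) ^ (m k - d k) * ((k:ℕ):ℚ) ^ (d k) = ((k:ℕ):ℚ) ^ (m k) := by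
    rw [← pow_add, Nat.sub_add_cancel hle]
  calc ((m k - d k).factorial : ℚ) * ((k:ℕ):ℚ) ^ (m k - d k)
        * ((((k:ℕ):ℚ)) ^ (d k) * ((m k).descFactorial (d k) : ℚ))
      = (((m k - d k).factorial : ℚ) * ((m k).descFactorial (d k) : ℚ))
        * (((k:ℕ):ℚ) ^ (m k - d k) * ((k:ℕ):ℚ) ^ (d k)) := by ring
    _ = ((m k).factorial : ℚ) * ((k:ℕ):ℚ) ^ (m k) := by rw [key', hpow]

lemma hZ_natCast (n : ℕ) : hZ (n : ℤ) = hn n := by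
  unfold hZ
  rw [if_pos (Int.natCast_nonneg n), Int.toNat_natCast]

def minorDet (L : List ℕ) (j : Fin (L.length + 1)) : SymF :=
  (Matrix.of (fun i i' : Fin L.length =>
    hZ ((L.get i : ℤ) + (((j.succAbove i' : Fin (L.length + 1)) : ℕ) : ℤ) - ((i : ℕ) : ℤ) - 1))).det

lemma schur_cons (a : ℕ) (L : List ℕ) :
    schurOfList (a :: L) = ∑ j : Fin (L.length + 1),
      (-1 : SymF) ^ (j : ℕ) * (hn (a + (j : ℕ)) * minorDet L j) := by
  unfold schurOfList
  rw [Matrix.det_succ_row_zero]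
  refine Finset.sum_congr rfl fun j _ => ?_
  have hA : hZ (((a :: L).get (0 : Fin (L.length + 1)) : ℤ) + (j : ℤ)
      - (((0 : Fin (L.length + 1)) : ℕ) : ℤ)) = hn (a + (j : ℕ)) := by
    have harg : ((a :: L).get (0 : Fin (L.length + 1)) : ℤ) + (j : ℤ)
        - (((0 : Fin (L.length + 1)) : ℕ) : ℤ) = ((a + (j : ℕ) : ℕ) : ℤ) := by
      have h0 : (a :: L).get (0 : Fin (L.length + 1)) = a := rfl
      rw [h0]
      push_cast [Fin.val_zero]
      ring
    rw [harg, hZ_natCast]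
  have hB : ((Matrix.of (fun i j : Fin ((a :: L).length) =>
      hZ (((a :: L).get i : ℤ) + (j : ℤ) - (i : ℤ)))).submatrix Fin.succ j.succAbove).det
      = minorDet L j := by
    unfold minorDet
    congr 1
    refine Matrix.ext fun i i' => ?_
    rw [Matrix.submatrix_apply]
    show hZ (((a :: L).get i.succ : ℤ) + ((j.succAbove i' : ℕ) : ℤ) - ((i.succ : ℕ) : ℤ))
      = hZ ((L.get i : ℤ) + ((j.succAbove i' : ℕ) : ℤ) - ((i : ℕ) : ℤ) - 1)
    congr 1
    have hget : (a :: L).get i.succ = L.get i := by simp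
    rw [hget, Fin.val_succ]
    push_cast
    ring
  rw [mul_assoc]
  exact congrArg₂ (· * ·) rfl (congrArg₂ (· * ·) hA hB)

lemma coeff_hn_mul (a : ℕ) (D : SymF) (m : ℕ+ →₀ ℕ) :
    (hn a * D).coeff m = ∑ d ∈ D.support,
      (if d ≤ m ∧ wt (m - d) = a then (zMon (m - d))⁻¹ * D.coeff d else 0) := by
  classical
  conv_lhs => rw [show D = ∑ d ∈ D.support, monomial d (D.coeff d) from D.as_sum]
  rw [Finset.mul_sum, coeff_sum]
  refine Finset.sum_congr rfl fun d _ => ?_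
  rw [coeff_mul_monomial', coeff_hn]
  by_cases h1 : d ≤ m
  · rw [if_pos h1]
    by_cases h2 : wt (m - d) = a
    · rw [if_pos h2, if_pos ⟨h1, h2⟩]
    · rw [if_neg h2, if_neg (fun hc => h2 hc.2), zero_mul]
  · rw [if_neg h1, if_neg (fun hc => h1 hc.1)]

def qAux (L : List ℕ) (kk : ℕ) : MvPolynomial ℕ+ ℚ :=
  ∑ j : Fin (L.length + 1), (-1 : MvPolynomial ℕ+ ℚ) ^ (j : ℕ) *
    ∑ d ∈ (minorDet L j).support,
      (if wt d + (j : ℕ) = kk then C ((minorDet L j).coeff d) * Qpoly d else 0)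


/-- For every partition `λ` there is a polynomial `q_λ` in the
part-multiplicity variables `x_1, x_2, …`, independent of `n`, such that
`χ^{(n-|λ|,λ)}(1^{m_1} 2^{m_2} ⋯) = q_λ(m_1, m_2, …)` for all nonnegative integers
`m_1, m_2, …` with `n = Σ_i i·m_i ≥ |λ| + λ_1`. -/
theorem exists_character_polynomial (lam : Multiset ℕ+) :
    ∃ q : MvPolynomial ℕ+ ℚ,
      ∀ m : ℕ+ →₀ ℕ,
        psize lam + maxPart lam ≤ psize (Finsupp.toMultiset m) →
        MvPolynomial.eval (fun k : ℕ+ => ((m k : ℕ) : ℚ)) q =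
          chi ((psize (Finsupp.toMultiset m) - psize lam) :: toList lam)
            (Finsupp.toMultiset m) := by
  classical
  refine ⟨qAux (toList lam) (psize lam), fun m h => ?_⟩
  have hn' : psize (Finsupp.toMultiset m) = wt m := psize_toMultiset m
  set k := psize lam with hk
  set L := toList lam with hL
  set n := wt m with hnn
  rw [hn'] at h ⊢
  have hkn : k ≤ n := le_trans (Nat.le_add_right _ _) h
  simp only [chi]
  rw [pProd_eq_monomial, Finsupp.toMultiset_toFinsupp, hall_monomial,
    schur_cons (n - k) L, MvPolynomial.coeff_sum, Finset.sum_mul,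
    qAux, map_sum]
  refine Finset.sum_congr rfl fun j _ => ?_
  have hC : ((-1 : SymF)) ^ (j : ℕ) = C ((-1 : ℚ) ^ (j : ℕ)) := by
    rw [map_pow, map_neg, map_one]
  rw [hC, coeff_C_mul, coeff_hn_mul, mul_assoc, Finset.sum_mul, map_mul, map_sum]
  rw [eval_C]
  congr 1
  refine Finset.sum_congr rfl fun d hd => ?_
  rw [apply_ite (eval (fun kk : ℕ+ => ((m kk : ℕ) : ℚ))), map_mul, eval_C, map_zero]
  by_cases hle : d ≤ m
  · have hsum : wt (m - d) + wt d = n := by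
      rw [← wt_add, tsub_add_cancel_of_le hle]
    by_cases hc : wt (m - d) = (n - k) + (j : ℕ)
    · have hwd : wt d + (j : ℕ) = k := by omega
      rw [if_pos hwd, if_pos ⟨hle, hc⟩]
      have hev := eval_Qpoly_of_le d m hle
      have hz := zMon_ne_zero (m - d)
      have heq : eval (fun kk : ℕ+ => ((m kk : ℕ) : ℚ)) (Qpoly d) = zMon m / zMon (m - d) := by
        rw [eq_div_iff hz]
        linear_combination hev
      rw [heq]
      field_simp
    · rw [if_neg (fun hw => hc (by omega)), if_neg (fun hcc => hc hcc.2), zero_mul]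
  · rw [eval_Qpoly_of_not_le d m hle, mul_zero,
      if_neg (fun hcc : _ ∧ _ => hle hcc.1), zero_mul, ite_self]


end
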